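/- The map ê : ℝ × (−2,2) → ℝ⁶, ê(q₂,α) = (q₁°(q₂,α), q₂, q₃°(q₂,α), α, ½·α·√(4−α²), α²/2), with q₁°(q₂,α) = −α³/2 − 2q₂·(4−α²)^(−1/2) and q₃°(q₂,α) = (3/2)α² + q₂·α·(4−α²)^(−1/2), is a smooth injective map whose Fréchet derivative at every point of its domain is injective; i.e., ê is an injective immersion of a 2-dimensional domain into ℝ⁶ ≅ T*ℝ³. -/

import Mathlib

/-- The `q₁` coordinate of the Legendre embedding of the toy model. -/
noncomputable def q₁circ (q₂ α : ℝ) : ℝ :=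
  -α ^ 3 / 2 - 2 * q₂ * (Real.sqrt (4 - α ^ 2))⁻¹

/-- The `q₃` coordinate of the Legendre embedding of the toy model. -/
noncomputable def q₃circ (q₂ α : ℝ) : ℝ :=
  (3 / 2) * α ^ 2 + q₂ * α * (Real.sqrt (4 - α ^ 2))⁻¹

/-- The Legendre embedding `ê(q₂,α) = (q₁°, q₂, q₃°, α, ½α√(4−α²), α²/2)` of the toy model,
with values in `T*ℝ³ ≅ ℝ⁶`. -/
noncomputable def ehat (x : ℝ × ℝ) : ℝ × ℝ × ℝ × ℝ × ℝ × ℝ :=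
  (q₁circ x.1 x.2, x.1, q₃circ x.1 x.2,
    x.2, (1 / 2) * x.2 * Real.sqrt (4 - x.2 ^ 2), x.2 ^ 2 / 2)

lemma four_sub_sq_pos {α : ℝ} (h : α ∈ Set.Ioo (-2 : ℝ) 2) : 0 < 4 - α ^ 2 := by
  nlinarith [h.1, h.2]

lemma sqrt_ne_zero' {α : ℝ} (h : α ∈ Set.Ioo (-2 : ℝ) 2) :
    Real.sqrt (4 - α ^ 2) ≠ 0 :=
  ne_of_gt (Real.sqrt_pos.mpr (four_sub_sq_pos h))

lemma ehat_contDiffAt (x : ℝ × ℝ) (hx : x.2 ∈ Set.Ioo (-2 : ℝ) 2) :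
    ContDiffAt ℝ (⊤ : ℕ∞) ehat x := by
  have hin : ContDiffAt ℝ (⊤ : ℕ∞) (fun y : ℝ × ℝ => 4 - y.2 ^ 2) x :=
    contDiffAt_const.sub (contDiffAt_snd.pow 2)
  have h1 : ContDiffAt ℝ (⊤ : ℕ∞) (fun y : ℝ × ℝ => Real.sqrt (4 - y.2 ^ 2)) x :=
    (Real.contDiffAt_sqrt (ne_of_gt (four_sub_sq_pos hx))).comp x hin
  have h2 : ContDiffAt ℝ (⊤ : ℕ∞) (fun y : ℝ × ℝ => (Real.sqrt (4 - y.2 ^ 2))⁻¹) x :=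
    h1.inv (sqrt_ne_zero' hx)
  unfold ehat q₁circ q₃circ
  exact (((contDiffAt_snd.pow 3).neg.div_const 2).sub
      ((contDiffAt_const.mul contDiffAt_fst).mul h2)).prodMk
    (contDiffAt_fst.prodMk
      (((contDiffAt_const.mul (contDiffAt_snd.pow 2)).add
          ((contDiffAt_fst.mul contDiffAt_snd).mul h2)).prodMk
        (contDiffAt_snd.prodMk
          (((contDiffAt_const.mul contDiffAt_snd).mul h1).prodMk
            ((contDiffAt_snd.pow 2).div_const 2)))))

/-- `ê` is a smooth injective map on `ℝ × (−2,2)` whose Fréchet derivative at every point of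
its domain is injective: an injective immersion of a 2-dimensional domain into `ℝ⁶ ≅ T*ℝ³`. -/
theorem ehat_injective_immersion :
    ContDiffOn ℝ (⊤ : ℕ∞) ehat (Set.univ ×ˢ Set.Ioo (-2 : ℝ) 2)
    ∧ Set.InjOn ehat (Set.univ ×ˢ Set.Ioo (-2 : ℝ) 2)
    ∧ ∀ x ∈ (Set.univ ×ˢ Set.Ioo (-2 : ℝ) 2 : Set (ℝ × ℝ)),
        Function.Injective (fderiv ℝ ehat x) := by
  refine ⟨?_, ?_, ?_⟩
  · intro x hx
    exact (ehat_contDiffAt x hx.2).contDiffWithinAt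
  · intro x _ y _ h
    have h1 : x.1 = y.1 := congrArg (fun v : ℝ × ℝ × ℝ × ℝ × ℝ × ℝ => v.2.1) h
    have h2 : x.2 = y.2 := congrArg (fun v : ℝ × ℝ × ℝ × ℝ × ℝ × ℝ => v.2.2.2.1) h
    exact Prod.ext h1 h2
  · intro x hx
    set L : (ℝ × ℝ × ℝ × ℝ × ℝ × ℝ) →L[ℝ] ℝ × ℝ :=
      ((ContinuousLinearMap.fst ℝ ℝ (ℝ × ℝ × ℝ × ℝ)).comp
          (ContinuousLinearMap.snd ℝ ℝ (ℝ × ℝ × ℝ × ℝ × ℝ))).prod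
        ((ContinuousLinearMap.fst ℝ ℝ (ℝ × ℝ)).comp
          (((ContinuousLinearMap.snd ℝ ℝ (ℝ × ℝ × ℝ)).comp
              (ContinuousLinearMap.snd ℝ ℝ (ℝ × ℝ × ℝ × ℝ))).comp
            (ContinuousLinearMap.snd ℝ ℝ (ℝ × ℝ × ℝ × ℝ × ℝ)))) with hLdef
    have hL : (L ∘ ehat) = id := by
      funext y
      rfl
    have hd : DifferentiableAt ℝ ehat x :=
      (ehat_contDiffAt x hx.2).differentiableAt (by simp)
    have hcomp : fderiv ℝ (L ∘ ehat) x = L.comp (fderiv ℝ ehat x) := by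
      rw [fderiv_comp x L.differentiableAt hd, ContinuousLinearMap.fderiv]
    have key : L.comp (fderiv ℝ ehat x) = ContinuousLinearMap.id ℝ (ℝ × ℝ) := by
      rw [← hcomp, hL, fderiv_id]
    intro u v huv
    have h2 : (ContinuousLinearMap.id ℝ (ℝ × ℝ)) u = (ContinuousLinearMap.id ℝ (ℝ × ℝ)) v := by
      rw [← key]
      simp only [ContinuousLinearMap.comp_apply, huv]
    simpa using h2
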